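/- Given M databases with equilibrium market shares η₁,…,η_M > 0 and utilities satisfying R_B < g(η₁) < g(η₂) < … < g(η_M) < R_S, the equilibrium prices defined by the system θ_s = (c−p_M)/(R_S−g(η_M)), θ_m = (p_m−p_{m−1})/(g(η_m)−g(η_{m−1})), θ_b = p₁/(g(η₁)−R_B), with η_M = θ_s − θ_M, η_m = θ_{m+1} − θ_m, η₁ = θ₂ − θ_b, admit the closed-form solution p_m = Σ_{j=1}^{m} (1 − Σ_{n=j}^{M+1} η_n)·(g(η_j) − g(η_{j−1})), where η_{M+1} = 1 − θ_s is the sensing share, g(η_0) := R_B, g(η_{M+1}) := R_S. -/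
import Mathlib


open Finset

/-- Oligopoly price inversion: with thresholds
θ_m = (p_m − p_{m−1})/(G_m − G_{m−1}) for m = 1,…,M+1 (conventions p_0 = 0,
p_{M+1} = c, G_0 = R_B, G_{M+1} = R_S, G_m = g(η_m)), equilibrium conditions
η_m = θ_{m+1} − θ_m for m = 1,…,M and sensing share η_{M+1} = 1 − θ_{M+1},
the prices admit the closed form
p_m = Σ_{j=1}^m (1 − Σ_{n=j}^{M+1} η_n)·(G_j − G_{j−1}). -/
theorem stmt_15 (M : ℕ) (hM : 1 ≤ M) (g : ℝ → ℝ) (η p : ℕ → ℝ)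
    (RB RS c : ℝ) (G θ : ℕ → ℝ)
    (hG : G = fun j => if j = 0 then RB else if j = M + 1 then RS else g (η j))
    (hpos : ∀ m ∈ Finset.Icc 1 M, 0 < η m)
    (hchain : ∀ m ∈ Finset.Icc 1 (M + 1), G (m - 1) < G m)
    (hp0 : p 0 = 0) (hpM1 : p (M + 1) = c)
    (hθ : ∀ m ∈ Finset.Icc 1 (M + 1),
      θ m = (p m - p (m - 1)) / (G m - G (m - 1)))
    (heq : ∀ m ∈ Finset.Icc 1 M, η m = θ (m + 1) - θ m)
    (hsense : η (M + 1) = 1 - θ (M + 1)) :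
    ∀ m ∈ Finset.Icc 1 M,
      p m = ∑ j ∈ Finset.Icc 1 m,
        (1 - ∑ n ∈ Finset.Icc j (M + 1), η n) * (G j - G (j - 1)) := by

  -- θ j = 1 - ∑_{n=j}^{M+1} η n
  have hθval : ∀ j, 1 ≤ j → j ≤ M + 1 → θ j = 1 - ∑ n ∈ Finset.Icc j (M + 1), η n := by
    have key : ∀ k, k ≤ M → θ (M + 1 - k) = 1 - ∑ n ∈ Finset.Icc (M + 1 - k) (M + 1), η n := by
      intro k
      induction k with
      | zero =>
        intro _
        simp [hsense]
      | succ k ih =>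
        intro hk
        have hkM : k ≤ M := Nat.le_of_succ_le hk
        have hj : M + 1 - (k + 1) = M - k := by omega
        have hj1 : (M - k) + 1 = M + 1 - k := by omega
        have hmem : M - k ∈ Finset.Icc 1 M := by
          simp only [Finset.mem_Icc]; omega
        have hηj := heq _ hmem
        have hθj : θ (M - k) = θ (M + 1 - k) - η (M - k) := by
          rw [← hj1]; linarith [hηj]
        have hsum : ∑ n ∈ Finset.Icc (M - k) (M + 1), η n
            = η (M - k) + ∑ n ∈ Finset.Icc (M + 1 - k) (M + 1), η n := by
          rw [← hj1, ← Finset.Ioc_insert_left (by omega : M - k ≤ M + 1),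
            Finset.sum_insert (by simp), Finset.Icc_add_one_left_eq_Ioc]
        rw [hj, hθj, ih hkM, hsum]
        ring
    intro j h1 h2
    have : j = M + 1 - (M + 1 - j) := by omega
    rw [this]
    exact key (M + 1 - j) (by omega)
  -- p j - p (j-1) = θ j * (G j - G (j-1))
  have hdiff : ∀ j, 1 ≤ j → j ≤ M + 1 → p j - p (j - 1) = θ j * (G j - G (j - 1)) := by
    intro j h1 h2
    have hmem : j ∈ Finset.Icc 1 (M + 1) := by simp only [Finset.mem_Icc]; omega
    have hne : G j - G (j - 1) ≠ 0 := by
      have := hchain j hmem; linarith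
    rw [hθ j hmem]
    field_simp
  have main : ∀ m, 1 ≤ m → m ≤ M → p m = ∑ j ∈ Finset.Icc 1 m,
      (1 - ∑ n ∈ Finset.Icc j (M + 1), η n) * (G j - G (j - 1)) := by
    intro m
    induction m with
    | zero => omega
    | succ m ih =>
      intro _ hle
      rcases Nat.eq_zero_or_pos m with hm0 | hm1
      · subst hm0
        have := hdiff 1 le_rfl (by omega)
        simp only [Nat.sub_self, hp0, sub_zero] at this
        rw [Finset.Icc_self, Finset.sum_singleton, ← hθval 1 le_rfl (by omega)]
        simpa using this
      · have hdm := hdiff (m + 1) (by omega) (by omega)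
        simp only [Nat.add_sub_cancel] at hdm
        rw [Finset.sum_Icc_succ_top (by omega : 1 ≤ m + 1),
          ← ih hm1 (by omega), ← hθval (m + 1) (by omega) (by omega)]
        simp only [Nat.add_sub_cancel]
        linarith
  intro m hm
  simp only [Finset.mem_Icc] at hm
  exact main m hm.1 hm.2
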